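/- arXiv:2410.08447 — 5 statements merged into one kernel-verified Lean document; each statement's English description precedes it below -/
import Mathlib

section
/- Let (ρ_k) be a positive sequence satisfying ρ_k = ρ_{k-1} + 1/(λ_e + λ_w (1 + λ_e ρ_{k-1})²) with λ_e, λ_w > 0 and ρ_0 > 0. Then ρ_k / k^{1/3} → (3/(λ_w λ_e²))^{1/3} as k → ∞. -/
/-!
The recursion is `ρ_{k+1} = ρ_k + f(ρ_k)` with `f` continuous and positive, so `ρ_k → ∞`. Since
`x² f(x) → 1/(λ_w λ_e²)`, expanding the cube gives `ρ_{k+1}³ - ρ_k³ → 3/(λ_w λ_e²)`; summing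
(Cesàro) yields `ρ_k³ / k → 3/(λ_w λ_e²)`, and the claim follows by taking cube roots.
-/

open Filter Topology

theorem tendsto_atTop_of_succ_eq_add {f : ℝ → ℝ} (hf : Continuous f) (hpos : ∀ x, 0 < f x)
    {x : ℕ → ℝ} (hx : ∀ k, x (k + 1) = x k + f (x k)) : Tendsto x atTop atTop := by
  have hmono : Monotone x := monotone_nat_of_le_succ fun k => by
    rw [hx k]; linarith [hpos (x k)]
  rcases tendsto_atTop_of_monotone hmono with h | ⟨l, hl⟩
  · exact h
  · have h_incr_zero : Tendsto (fun k => x (k + 1) - x k) atTop (𝓝 (l - l)) :=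
      (hl.comp (tendsto_add_atTop_nat 1)).sub hl
    have h_incr_pos : Tendsto (fun k => x (k + 1) - x k) atTop (𝓝 (f l)) :=
      ((hf.tendsto l).comp hl).congr fun k => by simp [hx k]
    have := tendsto_nhds_unique h_incr_zero h_incr_pos
    linarith [hpos l]

theorem tendsto_sq_div_add_mul_one_add_mul_sq (a : ℝ) {b c : ℝ} (hb : b ≠ 0) (hc : c ≠ 0) :
    Tendsto (fun x : ℝ => x ^ 2 / (a + b * (1 + c * x) ^ 2)) atTop (𝓝 (1 / (b * c ^ 2))) := by
  have h_denom : Tendsto (fun x : ℝ => a * x⁻¹ ^ 2 + b * (x⁻¹ + c) ^ 2) atTop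
      (𝓝 (a * 0 ^ 2 + b * (0 + c) ^ 2)) :=
    (tendsto_const_nhds.mul (tendsto_inv_atTop_zero.pow 2)).add
      (tendsto_const_nhds.mul ((tendsto_inv_atTop_zero.add tendsto_const_nhds).pow 2))
  rw [zero_pow two_ne_zero, mul_zero, zero_add, zero_add] at h_denom
  rw [one_div]
  refine (h_denom.inv₀ (by positivity)).congr' ?_
  filter_upwards [eventually_ne_atTop 0] with x hx
  rw [← inv_div]
  congr 1
  field_simp

theorem tendsto_add_pow_three_sub_pow_three {f : ℝ → ℝ} {c : ℝ}
    (hf : Tendsto (fun x => x ^ 2 * f x) atTop (𝓝 c)) :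
    Tendsto (fun x => (x + f x) ^ 3 - x ^ 3) atTop (𝓝 (3 * c)) := by
  have h := ((hf.const_mul 3).add ((hf.pow 2).mul (tendsto_inv_atTop_zero.pow 3)
    |>.const_mul 3)).add ((hf.pow 3).mul (tendsto_inv_atTop_zero.pow 6))
  rw [zero_pow three_ne_zero, zero_pow (by norm_num), mul_zero, mul_zero, mul_zero, add_zero,
    add_zero] at h
  refine h.congr' ?_
  filter_upwards [eventually_ne_atTop 0] with x hx
  field_simp
  ring

theorem tendsto_div_natCast_of_tendsto_sub_succ {a : ℕ → ℝ} {L : ℝ}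
    (h : Tendsto (fun k => a (k + 1) - a k) atTop (𝓝 L)) :
    Tendsto (fun k : ℕ => a k / k) atTop (𝓝 L) := by
  have h_add := h.cesaro.add (tendsto_const_div_atTop_nhds_zero_nat (a 0))
  rw [add_zero] at h_add
  refine h_add.congr' ?_
  filter_upwards [eventually_gt_atTop 0] with n hn
  rw [Finset.sum_range_sub a]
  field_simp
  ring

theorem tendsto_div_rpow_of_tendsto_pow_div {x : ℕ → ℝ} {n : ℕ} (hn : n ≠ 0) {A : ℝ}
    (hx : ∀ᶠ k in atTop, 0 ≤ x k) (h : Tendsto (fun k : ℕ => x k ^ n / k) atTop (𝓝 A)) :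
    Tendsto (fun k : ℕ => x k / (k : ℝ) ^ ((1 : ℝ) / n)) atTop (𝓝 (A ^ ((1 : ℝ) / n))) := by
  refine (h.rpow_const (Or.inr (by positivity))).congr' ?_
  filter_upwards [hx] with k hxk
  rw [Real.div_rpow (by positivity) k.cast_nonneg, one_div, Real.pow_rpow_inv_natCast hxk hn]

theorem two_agent_precision_rate_general
    (lam_e lam_w : ℝ) (hle : 0 < lam_e) (hlw : 0 < lam_w)
    (ρ : ℕ → ℝ)
    (hrec : ∀ k : ℕ, ρ (k + 1) = ρ k + 1 / (lam_e + lam_w * (1 + lam_e * ρ k) ^ 2)) :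
    Tendsto (fun k : ℕ => ρ k / (k : ℝ) ^ ((1 : ℝ) / 3)) atTop
      (nhds ((3 / (lam_w * lam_e ^ 2)) ^ ((1 : ℝ) / 3))) := by
  set f : ℝ → ℝ := fun x => 1 / (lam_e + lam_w * (1 + lam_e * x) ^ 2) with hf
  have hf_pos : ∀ x, 0 < f x := fun x => by positivity
  have hf_cont : Continuous f :=
    continuous_const.div (by fun_prop) fun x => (one_div_pos.mp (hf_pos x)).ne'
  have hρ_top : Tendsto ρ atTop atTop := tendsto_atTop_of_succ_eq_add hf_cont hf_pos hrec
  have h_sq : Tendsto (fun x => x ^ 2 * f x) atTop (𝓝 (1 / (lam_w * lam_e ^ 2))) := by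
    simpa only [hf, mul_one_div] using
      tendsto_sq_div_add_mul_one_add_mul_sq lam_e hlw.ne' hle.ne'
  have h_cube : Tendsto (fun k => ρ (k + 1) ^ 3 - ρ k ^ 3) atTop (𝓝 (3 / (lam_w * lam_e ^ 2))) := by
    rw [← mul_one_div]
    exact ((tendsto_add_pow_three_sub_pow_three h_sq).comp hρ_top).congr fun k => by
      simp only [Function.comp_apply, hrec k, hf]
  simpa using tendsto_div_rpow_of_tendsto_pow_div three_ne_zero (hρ_top.eventually_ge_atTop 0)
    (tendsto_div_natCast_of_tendsto_sub_succ h_cube)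

/-- Two-agent word-of-mouth social learning: the public-belief precision grows like
`k^{1/3}`, with `ρ_k / k^{1/3} → (3/(λ_w λ_e²))^{1/3}`. -/
theorem two_agent_precision_rate
    (lam_e lam_w : ℝ) (hle : 0 < lam_e) (hlw : 0 < lam_w)
    (ρ : ℕ → ℝ) (hρ0 : 0 < ρ 0) (hρpos : ∀ k, 0 < ρ k)
    (hrec : ∀ k : ℕ, ρ (k + 1) = ρ k + 1 / (lam_e + lam_w * (1 + lam_e * ρ k) ^ 2)) :
    Tendsto (fun k : ℕ => ρ k / (k : ℝ) ^ ((1 : ℝ) / 3)) atTop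
      (nhds ((3 / (lam_w * lam_e ^ 2)) ^ ((1 : ℝ) / 3))) :=
  two_agent_precision_rate_general lam_e lam_w hle hlw ρ hrec
end

section
/- Define γ^{(j)}(ρ) recursively by γ^{(1)}(ρ) = λ_w^{(1)} (1 + λ_e ρ)² and γ^{(j)}(ρ) = λ_w^{(j)} (1 + ρ(λ_e + Σ_{i=1}^{j−1} γ^{(i)}(ρ)))² for j ≥ 2, where λ_e, λ_w^{(i)} > 0. Then for each j ≥ 1, γ^{(j)} is a polynomial in ρ of degree 2^{j+1} − 2 whose leading coefficient is λ_e^{2^j} ∏_{i=1}^{j} (λ_w^{(i)})^{2^{j−i}} and whose remaining coefficients are all positive. -/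
open Finset Polynomial

/-!
Writing `S_k = λ_e + ∑_{i ≤ k} γ⁽ⁱ⁾` as a polynomial, the recursion reads
`S_{k+1} = S_k + λ_w⁽ᵏ⁺¹⁾ (1 + X S_k)²` and `γ⁽ᵏ⁺¹⁾ = λ_w⁽ᵏ⁺¹⁾ (1 + X S_k)²`.
Polynomials whose coefficients are positive up to the degree are closed under sums, products and
`S ↦ 1 + X S`, so all `S_k` and `γ⁽ʲ⁾` have this property. The new term dominates `S_k`, so
degrees and leading coefficients obey `d_{k+1} = 2 (d_k + 1)` and `c_{k+1} = λ_w⁽ᵏ⁺¹⁾ c_k²`,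
which solve to `2^{k+1} - 2` and the stated product.
-/

namespace Polynomial

section OneAddXMul

variable {R : Type*} [Semiring R] [Nontrivial R] {P : R[X]}

theorem natDegree_one_add_X_mul (hP : P ≠ 0) : (1 + X * P).natDegree = P.natDegree + 1 := by
  rw [← C_1, add_comm, natDegree_add_C, natDegree_X_mul hP]

theorem leadingCoeff_one_add_X_mul (hP : P ≠ 0) : (1 + X * P).leadingCoeff = P.leadingCoeff := by
  have hdeg : (C 1 : R[X]).degree < (X * P).degree := by
    rw [degree_C one_ne_zero, X_mul, degree_mul_X, degree_eq_natDegree hP]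
    exact_mod_cast Nat.succ_pos _
  rw [← C_1, add_comm, leadingCoeff_add_of_degree_lt' hdeg, X_mul, leadingCoeff_mul_X]

end OneAddXMul

variable {R : Type*} [Semiring R] [PartialOrder R]

def CoeffsPos (P : R[X]) : Prop :=
  ∀ i ≤ P.natDegree, 0 < P.coeff i

namespace CoeffsPos

variable {P Q : R[X]}

theorem coeff_nonneg (hP : P.CoeffsPos) (i : ℕ) : 0 ≤ P.coeff i := by
  rcases le_or_gt i P.natDegree with hi | hi
  · exact (hP i hi).le
  · rw [P.coeff_eq_zero_of_natDegree_lt hi]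

theorem ne_zero (hP : P.CoeffsPos) : P ≠ 0 := by
  rintro rfl
  simpa using hP 0 le_rfl

theorem leadingCoeff_pos (hP : P.CoeffsPos) : 0 < P.leadingCoeff :=
  hP _ le_rfl

variable [IsStrictOrderedRing R]

theorem add (hP : P.CoeffsPos) (hQ : Q.CoeffsPos) : (P + Q).CoeffsPos := by
  intro i hi
  rw [coeff_add]
  rcases le_max_iff.mp (hi.trans (natDegree_add_le P Q)) with hiP | hiQ
  · exact add_pos_of_pos_of_nonneg (hP i hiP) (hQ.coeff_nonneg i)
  · exact add_pos_of_nonneg_of_pos (hP.coeff_nonneg i) (hQ i hiQ)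

theorem mul (hP : P.CoeffsPos) (hQ : Q.CoeffsPos) : (P * Q).CoeffsPos := by
  intro k hk
  rw [natDegree_mul' (mul_pos hP.leadingCoeff_pos hQ.leadingCoeff_pos).ne'] at hk
  rw [coeff_mul]
  refine sum_pos' (fun p _ ↦ mul_nonneg (hP.coeff_nonneg _) (hQ.coeff_nonneg _))
    ⟨(min k P.natDegree, k - min k P.natDegree), ?_, ?_⟩
  · rw [HasAntidiagonal.mem_antidiagonal]
    omega
  · exact mul_pos (hP _ (min_le_right _ _)) (hQ _ (by omega))

theorem pow (hP : P.CoeffsPos) (n : ℕ) : (P ^ n).CoeffsPos := by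
  induction n with
  | zero => simp [CoeffsPos]
  | succ n ih => simpa [pow_succ] using ih.mul hP

theorem one_add_X_mul (hP : P.CoeffsPos) : (1 + X * P).CoeffsPos := by
  intro i hi
  rw [natDegree_one_add_X_mul hP.ne_zero] at hi
  cases i with
  | zero => simp
  | succ i => simpa [coeff_one] using hP i (by omega)

end CoeffsPos

theorem coeffsPos_C {a : R} (ha : 0 < a) : (C a).CoeffsPos := by
  intro i hi
  rw [natDegree_C, Nat.le_zero] at hi
  simpa [hi] using ha

end Polynomial

/-- The closed form of `c_k` for `c_0 = e`, `c_{k+1} = w_{k+1} c_k²`. -/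
def squaringProduct {M : Type*} [CommMonoid M] (e : M) (w : ℕ → M) (k : ℕ) : M :=
  e ^ 2 ^ k * ∏ i ∈ Icc 1 k, w i ^ 2 ^ (k - i)

theorem squaringProduct_succ {M : Type*} [CommMonoid M] (e : M) (w : ℕ → M) (k : ℕ) :
    squaringProduct e w (k + 1) = w (k + 1) * squaringProduct e w k ^ 2 := by
  have hprod : ∏ i ∈ Icc 1 k, w i ^ 2 ^ (k + 1 - i) = (∏ i ∈ Icc 1 k, w i ^ 2 ^ (k - i)) ^ 2 := by
    rw [← prod_pow]
    refine prod_congr rfl fun i hi ↦ ?_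
    rw [← pow_mul, Nat.sub_add_comm (mem_Icc.mp hi).2, pow_succ]
  rw [squaringProduct, squaringProduct, prod_Icc_succ_top (by omega), hprod, Nat.sub_self,
    pow_succ 2 k, pow_mul]
  simp only [pow_zero, pow_one, mul_pow]
  ac_rfl

section WordOfMouth

variable {R : Type*} [CommSemiring R]

/-- `γ⁽ʲ⁾ = noiseTerm λ_w⁽ʲ⁾ S_{j-1}`, where `S_{j-1} = λ_e + ∑_{i<j} γ⁽ⁱ⁾`. -/
noncomputable def noiseTerm (a : R) (S : R[X]) : R[X] :=
  C a * (1 + X * S) ^ 2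

/-- `noiseSum λ_e λ_w k` is `λ_e + ∑_{i=1}^k γ⁽ⁱ⁾` as a polynomial. -/
noncomputable def noiseSum (e : R) (w : ℕ → R) : ℕ → R[X]
  | 0 => C e
  | k + 1 => noiseSum e w k + noiseTerm (w (k + 1)) (noiseSum e w k)

theorem eval_noiseTerm (a : R) (S : R[X]) (ρ : R) :
    (noiseTerm a S).eval ρ = a * (1 + ρ * S.eval ρ) ^ 2 := by
  simp [noiseTerm]

theorem eval_noiseSum {e : R} {w : ℕ → R} {γ : ℕ → R → R}
    (hγ : ∀ j, 1 ≤ j → ∀ ρ, γ j ρ = w j * (1 + ρ * (e + ∑ i ∈ Icc 1 (j - 1), γ i ρ)) ^ 2)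
    (k : ℕ) (ρ : R) :
    (noiseSum e w k).eval ρ = e + ∑ i ∈ Icc 1 k, γ i ρ := by
  induction k with
  | zero => simp [noiseSum]
  | succ k ih =>
    rw [noiseSum, eval_add, eval_noiseTerm, ih, sum_Icc_succ_top (by omega),
      hγ (k + 1) (by omega), Nat.add_sub_cancel, add_assoc]

end WordOfMouth

section WordOfMouthDegree

variable {R : Type*} [CommRing R] [LinearOrder R] [IsStrictOrderedRing R]

theorem coeffsPos_noiseTerm {a : R} {S : R[X]} (ha : 0 < a) (hS : S.CoeffsPos) :
    (noiseTerm a S).CoeffsPos :=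
  (coeffsPos_C ha).mul (hS.one_add_X_mul.pow 2)

theorem natDegree_noiseTerm {a : R} {S : R[X]} (ha : a ≠ 0) (hS : S ≠ 0) :
    (noiseTerm a S).natDegree = 2 * (S.natDegree + 1) := by
  rw [noiseTerm, natDegree_C_mul ha, natDegree_pow, natDegree_one_add_X_mul hS]

theorem leadingCoeff_noiseTerm {a : R} {S : R[X]} (hS : S ≠ 0) :
    (noiseTerm a S).leadingCoeff = a * S.leadingCoeff ^ 2 := by
  rw [noiseTerm, leadingCoeff_mul, leadingCoeff_C, leadingCoeff_pow,
    leadingCoeff_one_add_X_mul hS]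

variable {e : R} {w : ℕ → R}

theorem coeffsPos_noiseSum (he : 0 < e) (hw : ∀ i, 0 < w i) (k : ℕ) :
    (noiseSum e w k).CoeffsPos := by
  induction k with
  | zero => exact coeffsPos_C he
  | succ k ih => exact ih.add (coeffsPos_noiseTerm (hw _) ih)

theorem natDegree_noiseSum_lt_noiseTerm (he : 0 < e) (hw : ∀ i, 0 < w i) (k : ℕ) :
    (noiseSum e w k).natDegree < (noiseTerm (w (k + 1)) (noiseSum e w k)).natDegree := by
  rw [natDegree_noiseTerm (hw _).ne' (coeffsPos_noiseSum he hw k).ne_zero]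
  omega

theorem natDegree_noiseSum_add_two (he : 0 < e) (hw : ∀ i, 0 < w i) (k : ℕ) :
    (noiseSum e w k).natDegree + 2 = 2 ^ (k + 1) := by
  induction k with
  | zero => simp [noiseSum]
  | succ k ih =>
    rw [noiseSum, natDegree_add_eq_right_of_natDegree_lt
      (natDegree_noiseSum_lt_noiseTerm he hw k),
      natDegree_noiseTerm (hw _).ne' (coeffsPos_noiseSum he hw k).ne_zero, pow_succ]
    omega

theorem leadingCoeff_noiseSum (he : 0 < e) (hw : ∀ i, 0 < w i) (k : ℕ) :
    (noiseSum e w k).leadingCoeff = squaringProduct e w k := by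
  induction k with
  | zero => simp [noiseSum, squaringProduct]
  | succ k ih =>
    have hS := coeffsPos_noiseSum he hw k
    have hlt := natDegree_noiseSum_lt_noiseTerm he hw k
    rw [noiseSum, leadingCoeff_add_of_degree_lt (degree_lt_degree hlt),
      leadingCoeff_noiseTerm hS.ne_zero, ih, squaringProduct_succ]

end WordOfMouthDegree

/-- Each equivalent-noise variance contribution `γ⁽ʲ⁾(ρ)` is a polynomial in `ρ` of degree
`2^{j+1} − 2` with leading coefficient `λ_e^{2^j} ∏_{i=1}^{j} (λ_w⁽ⁱ⁾)^{2^{j−i}}` and all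
remaining coefficients positive. -/
theorem gamma_polynomial_structure
    (lam_e : ℝ) (lam_w : ℕ → ℝ) (hle : 0 < lam_e) (hlw : ∀ i, 0 < lam_w i)
    (γ : ℕ → ℝ → ℝ)
    (hγ : ∀ j : ℕ, 1 ≤ j → ∀ ρ : ℝ,
      γ j ρ = lam_w j * (1 + ρ * (lam_e + ∑ i ∈ Finset.Icc 1 (j - 1), γ i ρ)) ^ 2) :
    ∀ j : ℕ, 1 ≤ j → ∃ P : Polynomial ℝ,
      (∀ ρ : ℝ, γ j ρ = P.eval ρ)
      ∧ P.natDegree = 2 ^ (j + 1) - 2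
      ∧ P.leadingCoeff = lam_e ^ (2 ^ j) * ∏ i ∈ Finset.Icc 1 j, lam_w i ^ (2 ^ (j - i))
      ∧ ∀ i < P.natDegree, 0 < P.coeff i := by
  rintro j hj
  obtain ⟨k, rfl⟩ : ∃ k, j = k + 1 := ⟨j - 1, by omega⟩
  have hS := coeffsPos_noiseSum hle hlw k
  refine ⟨noiseTerm (lam_w (k + 1)) (noiseSum lam_e lam_w k), fun ρ ↦ ?_, ?_, ?_, fun i hi ↦ ?_⟩
  · rw [hγ (k + 1) hj, eval_noiseTerm, Nat.add_sub_cancel, eval_noiseSum hγ]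
  · rw [natDegree_noiseTerm (hlw _).ne' hS.ne_zero, pow_succ,
      ← natDegree_noiseSum_add_two hle hlw k]
    omega
  · rw [leadingCoeff_noiseTerm hS.ne_zero, leadingCoeff_noiseSum hle hlw, ← squaringProduct_succ,
      squaringProduct]
  · exact coeffsPos_noiseTerm (hlw _) hS i hi.le
end

section
/- Let (ρ_k^{(m)}) be the public-belief precision of the m-agent word-of-mouth social learning model, satisfying ρ_k = ρ_{k-1} + 1/(λ_e + Σ_{i=1}^{m−1} γ^{(i)}(ρ_{k-1})) with γ^{(j)} defined recursively by γ^{(1)}(ρ) = λ_w^{(1)}(1 + λ_e ρ)² and γ^{(j)}(ρ) = λ_w^{(j)}(1 + ρ(λ_e + Σ_{i<j} γ^{(i)}(ρ)))², where all λ's are positive and ρ_0 > 0. Then ρ_k / k^{1/(2^m − 1)} → ((2^m − 1) / (λ_e^{2^{m−1}} ∏_{i=1}^{m−1} (λ_w^{(i)})^{2^{m−1−i}}))^{1/(2^m − 1)} as k → ∞. -/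
/-!
Write `S_j(ρ) = λ_e + ∑_{i ≤ j} γ^{(i)}(ρ)`. The definition of `γ` gives the recursion
`S_{j+1}(ρ) = S_j(ρ) + λ_w^{(j+1)} (1 + ρ S_j(ρ))²`, so by induction `S_j(ρ) ~ C_j ρ^(2^(j+1) - 2)`
with `C_{j+1} = λ_w^{(j+1)} C_j²`. The precision increases by `1 / S_{m-1}(ρ_k)`, hence tends to
infinity, and with `N = 2^m - 1` the increments of `ρ_k^N` behave like
`N ρ_k^(N-1) / S_{m-1}(ρ_k) → N / C_{m-1}`. By Cesàro, `ρ_k^N / k → N / C_{m-1}`; take `N`-th roots.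
-/

open Filter Finset Topology

namespace WordOfMouth

/-- `cumNoise λ_e λ_w j ρ` is the paper's `λ_e + ∑_{i=1}^{j} γ^{(i)}(ρ)`. -/
noncomputable def cumNoise (lam_e : ℝ) (w : ℕ → ℝ) : ℕ → ℝ → ℝ
  | 0, _ => lam_e
  | j + 1, x => cumNoise lam_e w j x + w (j + 1) * (1 + x * cumNoise lam_e w j x) ^ 2

noncomputable def noiseConst (lam_e : ℝ) (w : ℕ → ℝ) (j : ℕ) : ℝ :=
  lam_e ^ 2 ^ j * ∏ i ∈ Icc 1 j, w i ^ 2 ^ (j - i)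

variable {lam_e : ℝ} {w : ℕ → ℝ}

theorem sum_eq_cumNoise {γ : ℕ → ℝ → ℝ}
    (hγ : ∀ j : ℕ, 1 ≤ j → ∀ x : ℝ,
      γ j x = w j * (1 + x * (lam_e + ∑ i ∈ Icc 1 (j - 1), γ i x)) ^ 2) (j : ℕ) (x : ℝ) :
    lam_e + ∑ i ∈ Icc 1 j, γ i x = cumNoise lam_e w j x := by
  induction j with
  | zero => simp [cumNoise]
  | succ j ih =>
    rw [sum_Icc_succ_top (by omega), ← add_assoc, ih, hγ (j + 1) (by omega), Nat.add_sub_cancel,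
      ih, cumNoise]

theorem le_cumNoise (hw : ∀ i, 0 ≤ w i) (j : ℕ) (x : ℝ) : lam_e ≤ cumNoise lam_e w j x := by
  induction j with
  | zero => exact le_rfl
  | succ j ih =>
    have := mul_nonneg (hw (j + 1)) (sq_nonneg (1 + x * cumNoise lam_e w j x))
    rw [cumNoise]
    linarith

theorem cumNoise_monotoneOn (he : 0 ≤ lam_e) (hw : ∀ i, 0 ≤ w i) (j : ℕ) :
    MonotoneOn (cumNoise lam_e w j) (Set.Ici 0) := by
  induction j with
  | zero => exact monotoneOn_const
  | succ j ih =>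
    intro x hx y hy hxy
    have hS := he.trans (le_cumNoise hw j x)
    have hinner : 1 + x * cumNoise lam_e w j x ≤ 1 + y * cumNoise lam_e w j y :=
      add_le_add_right (mul_le_mul hxy (ih hx hy hxy) hS hy) 1
    have hinner_nonneg : 0 ≤ 1 + x * cumNoise lam_e w j x := by
      have := mul_nonneg (Set.mem_Ici.mp hx) hS
      linarith
    exact add_le_add (ih hx hy hxy)
      (mul_le_mul_of_nonneg_left (pow_le_pow_left₀ hinner_nonneg hinner 2) (hw _))

theorem noiseConst_pos (he : 0 < lam_e) (hw : ∀ i, 0 < w i) (j : ℕ) : 0 < noiseConst lam_e w j :=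
  mul_pos (pow_pos he _) (prod_pos fun i _ => pow_pos (hw i) _)

theorem noiseConst_succ (j : ℕ) :
    noiseConst lam_e w (j + 1) = w (j + 1) * noiseConst lam_e w j ^ 2 := by
  have hprod : ∏ i ∈ Icc 1 j, w i ^ 2 ^ (j + 1 - i) = (∏ i ∈ Icc 1 j, w i ^ 2 ^ (j - i)) ^ 2 := by
    rw [← prod_pow]
    refine prod_congr rfl fun i hi => ?_
    rw [← pow_mul, ← pow_succ, Nat.sub_add_comm (mem_Icc.mp hi).2]
  rw [noiseConst, noiseConst, prod_Icc_succ_top (by omega), hprod, Nat.sub_self, pow_succ,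
    pow_mul]
  ring

/-- With `e = 2^(j+1) - 2`, the step `j → j + 1` reads
`S_{j+1}(x)/x^(2e+2) = (S_j(x)/x^e) / x^(e+2) + w_{j+1} (1/x^(e+1) + S_j(x)/x^e)^2`. -/
theorem tendsto_cumNoise_div_pow (j : ℕ) :
    Tendsto (fun x => cumNoise lam_e w j x / x ^ (2 ^ (j + 1) - 2)) atTop
      (𝓝 (noiseConst lam_e w j)) := by
  induction j with
  | zero => simp [cumNoise, noiseConst]
  | succ j ih =>
    set e := 2 ^ (j + 1) - 2
    have he : 2 ^ (j + 1 + 1) - 2 = 2 * e + 2 := by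
      have : 2 ≤ 2 ^ (j + 1) := Nat.le_self_pow (by omega) 2
      rw [pow_succ]
      omega
    have hinv (p : ℕ) : Tendsto (fun x : ℝ => 1 / x ^ (p + 1)) atTop (𝓝 0) :=
      tendsto_const_nhds.div_atTop (tendsto_pow_atTop (by omega))
    have hlim := (ih.mul (hinv (e + 1))).add
      ((tendsto_const_nhds (x := w (j + 1))).mul (((hinv e).add ih).pow 2))
    rw [mul_zero, zero_add, zero_add, ← noiseConst_succ] at hlim
    refine hlim.congr' ?_
    filter_upwards [eventually_gt_atTop 0] with x hx
    rw [he, cumNoise]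
    field_simp
    rw [pow_succ]
    ring

end WordOfMouth

open WordOfMouth

section IncrementSequences

variable {ρ : ℕ → ℝ} {S : ℝ → ℝ}

theorem tendsto_atTop_of_succ_eq_add_inv (hSpos : ∀ x, 0 < S x)
    (hS : MonotoneOn S (Set.Ici 0)) (hρ : ∀ k, 0 ≤ ρ k)
    (hrec : ∀ k, ρ (k + 1) = ρ k + 1 / S (ρ k)) : Tendsto ρ atTop atTop := by
  have hmono : Monotone ρ := monotone_nat_of_le_succ fun k => by
    rw [hrec k]
    have := one_div_pos.mpr (hSpos (ρ k))
    linarith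
  refine (tendsto_atTop_of_monotone hmono).resolve_right fun ⟨l, hl⟩ => ?_
  have hincr : Tendsto (fun k => ρ (k + 1) - ρ k) atTop (𝓝 0) := by
    simpa using (hl.comp (tendsto_add_atTop_nat 1)).sub hl
  -- Below its limit `l`, the sequence moves by at least `1 / S l` at every step.
  have hstep (k : ℕ) : 1 / S l ≤ ρ (k + 1) - ρ k := by
    have hle : ρ k ≤ l := hmono.ge_of_tendsto hl k
    rw [hrec k, add_sub_cancel_left]
    exact one_div_le_one_div_of_le (hSpos _) (hS (hρ k) ((hρ k).trans hle) hle)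
  linarith [ge_of_tendsto' hincr hstep, one_div_pos.mpr (hSpos l)]

theorem tendsto_div_natCast_of_tendsto_sub {u : ℕ → ℝ} {L : ℝ}
    (h : Tendsto (fun k => u (k + 1) - u k) atTop (𝓝 L)) :
    Tendsto (fun k => u k / k) atTop (𝓝 L) := by
  have hmean : Tendsto (fun k : ℕ => (k : ℝ)⁻¹ * (u k - u 0)) atTop (𝓝 L) :=
    h.cesaro.congr fun k => by rw [sum_range_sub (fun i => u i)]
  have hinit : Tendsto (fun k : ℕ => (k : ℝ)⁻¹ * u 0) atTop (𝓝 0) := by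
    simpa using tendsto_inv_atTop_nhds_zero_nat.mul_const (u 0)
  simpa [div_eq_inv_mul, mul_sub] using hmean.add hinit

theorem tendsto_pow_div_natCast_of_succ_eq_add_inv {e : ℕ} {c : ℝ} (hc : 0 < c)
    (hρ : ∀ k, 0 < ρ k) (hρtop : Tendsto ρ atTop atTop)
    (hS : Tendsto (fun x => S x / x ^ e) atTop (𝓝 c))
    (hrec : ∀ k, ρ (k + 1) = ρ k + 1 / S (ρ k)) :
    Tendsto (fun k => ρ k ^ (e + 1) / k) atTop (𝓝 ((e + 1) / c)) := by
  have hweight : Tendsto (fun k => ρ k ^ e / S (ρ k)) atTop (𝓝 c⁻¹) := by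
    simpa only [Function.comp_def, inv_div] using (hS.comp hρtop).inv₀ hc.ne'
  have hratio : Tendsto (fun k => ρ (k + 1) / ρ k) atTop (𝓝 1) := by
    have hsmall :=
      hweight.mul ((tendsto_pow_atTop (Nat.succ_ne_zero e)).comp hρtop).inv_tendsto_atTop
    have hone := hsmall.const_add 1
    rw [mul_zero, add_zero] at hone
    refine hone.congr fun k => ?_
    have hρk := (hρ k).ne'
    simp only [Pi.inv_apply, Function.comp_apply]
    rw [hrec k]
    field_simp
    rw [pow_succ]
    ring
  -- `ρ_{k+1}^N - ρ_k^N = (∑_{i<N} r^i) ρ_k^(N-1) (ρ_{k+1} - ρ_k)`, where `N = e + 1` and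
  -- `r = ρ_{k+1}/ρ_k`.
  have hgeom : Tendsto (fun k => (∑ i ∈ range (e + 1), (ρ (k + 1) / ρ k) ^ i) * (ρ k ^ e / S (ρ k)))
      atTop (𝓝 ((e + 1) * c⁻¹)) := by
    simpa using (tendsto_finsetSum (range (e + 1)) fun i _ => hratio.pow i).mul hweight
  refine tendsto_div_natCast_of_tendsto_sub (hgeom.congr fun k => ?_)
  have hρk := (hρ k).ne'
  have hpow : ρ (k + 1) ^ (e + 1) - ρ k ^ (e + 1)
      = ρ k ^ (e + 1) * ((ρ (k + 1) / ρ k) ^ (e + 1) - 1) := by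
    rw [div_pow]
    field_simp
  have hr : ρ (k + 1) / ρ k - 1 = 1 / S (ρ k) / ρ k := by
    rw [hrec k]
    field_simp
    ring
  rw [hpow, ← geom_sum_mul, hr]
  field_simp
  ring

theorem tendsto_div_rpow_of_tendsto_pow_div_s10 {u : ℕ → ℝ} {N : ℕ} {L : ℝ} (hu : ∀ k, 0 ≤ u k)
    (hN : N ≠ 0) (h : Tendsto (fun k => u k ^ N / k) atTop (𝓝 L)) :
    Tendsto (fun k => u k / (k : ℝ) ^ ((1 : ℝ) / N)) atTop (𝓝 (L ^ ((1 : ℝ) / N))) := by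
  refine (h.rpow_const (Or.inr (by positivity))).congr fun k => ?_
  rw [Real.div_rpow (pow_nonneg (hu k) N) k.cast_nonneg, ← Real.rpow_natCast,
    ← Real.rpow_mul (hu k), mul_one_div_cancel (Nat.cast_ne_zero.mpr hN), Real.rpow_one]

end IncrementSequences

/-- `m`-agent word-of-mouth social learning: the public-belief precision satisfies
`ρ_k / k^{1/(2^m − 1)} → ((2^m − 1)/(λ_e^{2^{m−1}} ∏_{i=1}^{m−1} (λ_w⁽ⁱ⁾)^{2^{m−1−i}}))^{1/(2^m − 1)}`. -/
theorem m_agent_precision_rate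
    (m : ℕ) (hm : 2 ≤ m)
    (lam_e : ℝ) (lam_w : ℕ → ℝ) (hle : 0 < lam_e) (hlw : ∀ i, 0 < lam_w i)
    (γ : ℕ → ℝ → ℝ)
    (hγ : ∀ j : ℕ, 1 ≤ j → ∀ ρ : ℝ,
      γ j ρ = lam_w j * (1 + ρ * (lam_e + ∑ i ∈ Finset.Icc 1 (j - 1), γ i ρ)) ^ 2)
    (ρ : ℕ → ℝ) (hρpos : ∀ k, 0 < ρ k)
    (hrec : ∀ k : ℕ, ρ (k + 1) = ρ k
      + 1 / (lam_e + ∑ i ∈ Finset.Icc 1 (m - 1), γ i (ρ k))) :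
    Tendsto (fun k : ℕ => ρ k / (k : ℝ) ^ ((1 : ℝ) / (2 ^ m - 1))) atTop
      (nhds (((2 ^ m - 1 : ℝ)
        / (lam_e ^ (2 ^ (m - 1)) * ∏ i ∈ Finset.Icc 1 (m - 1), lam_w i ^ (2 ^ (m - 1 - i))))
          ^ ((1 : ℝ) / (2 ^ m - 1)))) := by
  obtain ⟨n, rfl⟩ : ∃ n, m = n + 1 := ⟨m - 1, by omega⟩
  have hw (i : ℕ) : 0 ≤ lam_w i := (hlw i).le
  simp only [Nat.add_sub_cancel, sum_eq_cumNoise hγ] at hrec ⊢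
  have hρtop := tendsto_atTop_of_succ_eq_add_inv (fun x => hle.trans_le (le_cumNoise hw n x))
    (cumNoise_monotoneOn hle.le hw n) (fun k => (hρpos k).le) hrec
  have hlim := tendsto_pow_div_natCast_of_succ_eq_add_inv (noiseConst_pos hle hlw n) hρpos hρtop
    (tendsto_cumNoise_div_pow n) hrec
  have hN : ((2 ^ (n + 1) - 2 : ℕ) : ℝ) + 1 = 2 ^ (n + 1) - 1 := by
    have : 2 ≤ 2 ^ (n + 1) := Nat.le_self_pow (by omega) 2
    push_cast [Nat.cast_sub this]
    ring
  simpa only [Nat.cast_succ, hN, noiseConst] using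
    tendsto_div_rpow_of_tendsto_pow_div_s10 (fun k => (hρpos k).le) (Nat.succ_ne_zero _) hlim
end

section
/- In the m-agent word-of-mouth model, the denominator D(ρ) = λ_e + Σ_{i=1}^{m−1} γ^{(i)}(ρ) can be written as D(ρ) = a ρ^{2^m − 2} + g(ρ), where a = λ_e^{2^{m−1}} ∏_{i=1}^{m−1}(λ_w^{(i)})^{2^{m−1−i}} and g is a polynomial of degree strictly less than 2^m − 2 with positive coefficients (hence strictly increasing on ℝ₊ and bounded below by λ_e). -/
/-!
The denominator is the value at `ρ` of the polynomial `D_{m-1}`, where `D_0 = λ_e` and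
`D_{j+1} = D_j + λ_w^{(j+1)} (1 + X D_j)²`. By induction `D_j` has degree `2^{j+1} - 2`, all its
coefficients up to that degree are positive (products and sums of such polynomials are again of
this kind), and its leading coefficient `c_j` satisfies `c_{j+1} = λ_w^{(j+1)} c_j²`. Then `g` is
`D_{m-1}` with its leading term erased; a polynomial with positive coefficients is strictly
increasing on `[0, ∞)` and bounded below there by its constant term, which is at least `λ_e`.
-/

open Finset Polynomial

lemma two_pow_add_two_sub_two (j : ℕ) : 2 ^ (j + 2) - 2 = 2 * ((2 ^ (j + 1) - 2) + 1) := by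
  have : 2 ≤ 2 ^ (j + 1) := Nat.le_self_pow (by omega) 2
  rw [pow_succ 2 (j + 1)]
  omega

namespace Polynomial

variable {R : Type*} [CommSemiring R]

lemma coeff_one_add_X_mul_succ (p : R[X]) (n : ℕ) : (1 + X * p).coeff (n + 1) = p.coeff n := by
  rw [coeff_add, coeff_X_mul, coeff_one, if_neg (by omega), zero_add]

variable [PartialOrder R]

def PosCoeffsUpTo (p : R[X]) (d : ℕ) : Prop :=
  (∀ i ≤ d, 0 < p.coeff i) ∧ ∀ i, d < i → p.coeff i = 0

lemma posCoeffsUpTo_C {c : R} (hc : 0 < c) : PosCoeffsUpTo (C c) 0 :=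
  ⟨fun i hi => by simpa [Nat.le_zero.mp hi] using hc,
   fun i hi => by rw [coeff_C, if_neg (by omega)]⟩

namespace PosCoeffsUpTo

variable {p q : R[X]} {d e : ℕ}

lemma coeff_nonneg (hp : PosCoeffsUpTo p d) (i : ℕ) : 0 ≤ p.coeff i := by
  rcases le_or_gt i d with hi | hi
  · exact (hp.1 i hi).le
  · exact (hp.2 i hi).ge

lemma natDegree_eq (hp : PosCoeffsUpTo p d) : p.natDegree = d :=
  le_antisymm (natDegree_le_iff_coeff_eq_zero.mpr hp.2)
    (le_natDegree_of_ne_zero (hp.1 d le_rfl).ne')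

lemma eraseLead (hp : PosCoeffsUpTo p (d + 1)) : PosCoeffsUpTo p.eraseLead d := by
  refine ⟨fun i hi => ?_, fun i hi => ?_⟩
  · rw [eraseLead_coeff_of_ne i (by rw [hp.natDegree_eq]; omega)]
    exact hp.1 i (by omega)
  · rw [eraseLead_coeff]
    split_ifs with h
    · rfl
    · exact hp.2 i (by rw [hp.natDegree_eq] at h; omega)

variable [IsStrictOrderedRing R]

lemma one_add_X_mul (hp : PosCoeffsUpTo p d) :
    PosCoeffsUpTo (1 + X * p) (d + 1) := by
  refine ⟨fun i hi => ?_, fun i hi => ?_⟩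
  · cases i with
    | zero => simp [coeff_one]
    | succ n => rw [coeff_one_add_X_mul_succ]; exact hp.1 n (by omega)
  · cases i with
    | zero => omega
    | succ n => rw [coeff_one_add_X_mul_succ]; exact hp.2 n (by omega)

lemma mul (hp : PosCoeffsUpTo p d) (hq : PosCoeffsUpTo q e) : PosCoeffsUpTo (p * q) (d + e) := by
  refine ⟨fun k hk => ?_, fun k hk => ?_⟩
  · rw [coeff_mul]
    refine sum_pos' (fun x _ => mul_nonneg (hp.coeff_nonneg _) (hq.coeff_nonneg _))
      ⟨(min k d, k - min k d), ?_, mul_pos (hp.1 _ (min_le_right k d)) (hq.1 _ (by omega))⟩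
    rw [HasAntidiagonal.mem_antidiagonal]
    omega
  · rw [coeff_mul]
    refine sum_eq_zero fun x hx => ?_
    rw [HasAntidiagonal.mem_antidiagonal] at hx
    rcases le_or_gt x.1 d with h | h
    · rw [hq.2 x.2 (by omega), mul_zero]
    · rw [hp.2 x.1 h, zero_mul]

lemma add_of_le (hp : PosCoeffsUpTo p d) (hq : PosCoeffsUpTo q e) (hde : d ≤ e) :
    PosCoeffsUpTo (p + q) e :=
  ⟨fun i hi => by rw [coeff_add]; exact add_pos_of_nonneg_of_pos (hp.coeff_nonneg i) (hq.1 i hi),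
   fun i hi => by rw [coeff_add, hp.2 i (by omega), hq.2 i hi, add_zero]⟩

lemma pow (hp : PosCoeffsUpTo p d) (n : ℕ) : PosCoeffsUpTo (p ^ n) (n * d) := by
  induction n with
  | zero =>
    simpa using posCoeffsUpTo_C (R := R) one_pos
  | succ n ih => simpa only [pow_succ, Nat.succ_mul] using ih.mul hp

lemma coeff_zero_le_eval (hp : PosCoeffsUpTo p d) {x : R} (hx : 0 ≤ x) :
    p.coeff 0 ≤ p.eval x := by
  rw [eval_eq_sum_range]
  simpa using single_le_sum (f := fun i => p.coeff i * x ^ i)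
    (fun i _ => mul_nonneg (hp.coeff_nonneg i) (pow_nonneg hx i)) (mem_range.mpr (Nat.succ_pos _))

lemma strictMonoOn_eval (hp : PosCoeffsUpTo p d) (hd : 1 ≤ d) :
    StrictMonoOn p.eval (Set.Ici 0) := by
  intro x hx y hy hxy
  dsimp only
  rw [eval_eq_sum_range, eval_eq_sum_range, hp.natDegree_eq]
  refine sum_lt_sum (fun i _ => ?_) ⟨1, mem_range.mpr (by omega), ?_⟩
  · exact mul_le_mul_of_nonneg_left (pow_le_pow_left₀ hx hxy.le i) (hp.coeff_nonneg i)
  · simpa only [pow_one] using mul_lt_mul_of_pos_left hxy (hp.1 1 hd)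

end PosCoeffsUpTo

end Polynomial

section Denominator

variable {R : Type*} [CommSemiring R] (lam_e : R) (lam_w : ℕ → R)

noncomputable def denomPoly : ℕ → R[X]
  | 0 => C lam_e
  | j + 1 => denomPoly j + C (lam_w (j + 1)) * (1 + X * denomPoly j) ^ 2

variable {lam_e lam_w}

lemma eval_denomPoly (γ : ℕ → R → R)
    (hγ : ∀ j : ℕ, 1 ≤ j → ∀ ρ : R,
      γ j ρ = lam_w j * (1 + ρ * (lam_e + ∑ i ∈ Icc 1 (j - 1), γ i ρ)) ^ 2)
    (j : ℕ) (ρ : R) :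
    (denomPoly lam_e lam_w j).eval ρ = lam_e + ∑ i ∈ Icc 1 j, γ i ρ := by
  induction j with
  | zero => simp [denomPoly]
  | succ j ih =>
    rw [sum_Icc_succ_top (by omega), hγ (j + 1) (by omega), Nat.add_sub_cancel]
    simp only [denomPoly, eval_add, eval_mul, eval_pow, eval_one, eval_X, eval_C, ih]
    ring

lemma posCoeffsUpTo_denomPoly [PartialOrder R] [IsStrictOrderedRing R]
    (hle : 0 < lam_e) (hlw : ∀ i, 0 < lam_w i) (j : ℕ) :
    PosCoeffsUpTo (denomPoly lam_e lam_w j) (2 ^ (j + 1) - 2) := by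
  induction j with
  | zero => exact posCoeffsUpTo_C hle
  | succ j ih =>
    have h := ih.add_of_le ((posCoeffsUpTo_C (hlw (j + 1))).mul (ih.one_add_X_mul.pow 2))
      (by omega)
    rwa [zero_add, ← two_pow_add_two_sub_two] at h

lemma coeff_denomPoly_two_pow_sub_two [PartialOrder R] [IsStrictOrderedRing R]
    (hle : 0 < lam_e) (hlw : ∀ i, 0 < lam_w i) (j : ℕ) :
    (denomPoly lam_e lam_w j).coeff (2 ^ (j + 1) - 2)
      = lam_e ^ 2 ^ j * ∏ i ∈ Icc 1 j, lam_w i ^ 2 ^ (j - i) := by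
  induction j with
  | zero => simp [denomPoly]
  | succ j ih =>
    have hpos := posCoeffsUpTo_denomPoly hle hlw j
    have hsq : ((1 + X * denomPoly lam_e lam_w j) ^ 2).coeff (2 * ((2 ^ (j + 1) - 2) + 1))
        = (denomPoly lam_e lam_w j).coeff (2 ^ (j + 1) - 2) ^ 2 := by
      rw [coeff_pow_of_natDegree_le hpos.one_add_X_mul.natDegree_eq.le, coeff_one_add_X_mul_succ]
    rw [two_pow_add_two_sub_two, denomPoly, coeff_add, hpos.2 _ (by omega), zero_add, coeff_C_mul,
      hsq, ih, prod_Icc_succ_top (by omega), Nat.sub_self, pow_zero, pow_one, mul_pow,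
      ← pow_mul, ← prod_pow, pow_succ 2 j]
    have hexp : ∀ i ∈ Icc 1 j, (lam_w i ^ 2 ^ (j - i)) ^ 2 = lam_w i ^ 2 ^ (j + 1 - i) := by
      intro i hi
      rw [← pow_mul, ← pow_succ, Nat.sub_add_comm (mem_Icc.mp hi).2]
    rw [prod_congr rfl hexp]
    ring

lemma le_coeff_zero_denomPoly [PartialOrder R] [IsOrderedRing R] (hlw : ∀ i, 0 ≤ lam_w i)
    (j : ℕ) : lam_e ≤ (denomPoly lam_e lam_w j).coeff 0 := by
  induction j with
  | zero => simp [denomPoly]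
  | succ j ih =>
    simp only [denomPoly, coeff_zero_eq_eval_zero, eval_add, eval_mul, eval_pow, eval_one,
      eval_X, eval_C, zero_mul, add_zero, one_pow, mul_one] at ih ⊢
    exact le_add_of_le_of_nonneg ih (hlw (j + 1))

end Denominator

/-- The denominator `D(ρ) = λ_e + Σ_{i=1}^{m−1} γ⁽ⁱ⁾(ρ)` can be written as
`D(ρ) = a ρ^{2^m − 2} + g(ρ)` with `a = λ_e^{2^{m−1}} ∏_{i=1}^{m−1} (λ_w⁽ⁱ⁾)^{2^{m−1−i}}`
and `g` a polynomial of degree `< 2^m − 2` with positive coefficients, hence strictly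
increasing on `ℝ₊` and bounded below by `λ_e`. -/
theorem denominator_structure
    (m : ℕ) (hm : 2 ≤ m)
    (lam_e : ℝ) (lam_w : ℕ → ℝ) (hle : 0 < lam_e) (hlw : ∀ i, 0 < lam_w i)
    (γ : ℕ → ℝ → ℝ)
    (hγ : ∀ j : ℕ, 1 ≤ j → ∀ ρ : ℝ,
      γ j ρ = lam_w j * (1 + ρ * (lam_e + ∑ i ∈ Finset.Icc 1 (j - 1), γ i ρ)) ^ 2) :
    ∃ g : Polynomial ℝ,
      (∀ ρ : ℝ, lam_e + ∑ i ∈ Finset.Icc 1 (m - 1), γ i ρ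
        = (lam_e ^ (2 ^ (m - 1)) * ∏ i ∈ Finset.Icc 1 (m - 1), lam_w i ^ (2 ^ (m - 1 - i)))
            * ρ ^ (2 ^ m - 2) + g.eval ρ)
      ∧ g.natDegree < 2 ^ m - 2
      ∧ (∀ i ≤ g.natDegree, 0 < g.coeff i)
      ∧ StrictMonoOn (fun ρ : ℝ => g.eval ρ) (Set.Ici 0)
      ∧ ∀ ρ : ℝ, 0 ≤ ρ → lam_e ≤ g.eval ρ := by
  have hpow : 4 ≤ 2 ^ m := by
    simpa using Nat.pow_le_pow_right (n := 2) (by omega) hm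
  set D := denomPoly lam_e lam_w (m - 1)
  have hpos : PosCoeffsUpTo D ((2 ^ m - 3) + 1) := by
    have := posCoeffsUpTo_denomPoly hle hlw (m - 1)
    rwa [Nat.sub_add_cancel (by omega), (by omega : 2 ^ m - 2 = 2 ^ m - 3 + 1)] at this
  have hnatDegree : D.natDegree = 2 ^ m - 2 := by rw [hpos.natDegree_eq]; omega
  have hlead : D.leadingCoeff
      = lam_e ^ 2 ^ (m - 1) * ∏ i ∈ Icc 1 (m - 1), lam_w i ^ 2 ^ (m - 1 - i) := by
    rw [leadingCoeff, hnatDegree, ← coeff_denomPoly_two_pow_sub_two hle hlw (m - 1),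
      Nat.sub_add_cancel (by omega)]
  have hg := hpos.eraseLead
  refine ⟨D.eraseLead, fun ρ => ?_, by rw [hg.natDegree_eq]; omega,
    fun i hi => hg.1 i (hg.natDegree_eq ▸ hi), hg.strictMonoOn_eval (by omega),
    fun ρ hρ => ?_⟩
  · rw [← eval_denomPoly γ hγ, ← hlead, ← hnatDegree]
    change D.eval ρ = _
    conv_lhs => rw [← D.eraseLead_add_C_mul_X_pow]
    rw [eval_add, eval_mul, eval_C, eval_pow, eval_X, add_comm]
  · calc lam_e ≤ D.coeff 0 := le_coeff_zero_denomPoly (fun i => (hlw i).le) (m - 1)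
      _ = D.eraseLead.coeff 0 := (eraseLead_coeff_of_ne 0 (by omega)).symm
      _ ≤ D.eraseLead.eval ρ := hg.coeff_zero_le_eval hρ
end

section
/- Let (Y_k) be a positive sequence satisfying, for all k larger than some K, Y_k ≤ Y_{k-1}(1 − c/k) + 2/(C k Y_{k-1}^N) whenever Y_{k-1} > 1, and Y_k ≤ 2 whenever Y_{k-1} ≤ 1 and k ≥ K, where c, C > 0 and N ≥ 1. Then (Y_k) is bounded. -/
/-- Boundedness lemma for the normalized sequence in the Riccati asymptotic analysis. -/
theorem normalized_sequence_bounded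
    (c C : ℝ) (hc : 0 < c) (hC : 0 < C) (N : ℕ) (hN : 1 ≤ N) (K : ℕ)
    (Y : ℕ → ℝ) (hYpos : ∀ k, 0 < Y k)
    (h1 : ∀ k : ℕ, K < k → 1 < Y (k - 1) →
      Y k ≤ Y (k - 1) * (1 - c / k) + 2 / (C * k * Y (k - 1) ^ N))
    (h2 : ∀ k : ℕ, K ≤ k → Y (k - 1) ≤ 1 → Y k ≤ 2) :
    BddAbove (Set.range Y) := by
  set B : ℝ := max 2 (2 / (c * C) + 2 / C) with hB
  have hB2 : (2 : ℝ) ≤ B := le_max_left _ _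
  have hBc : 2 / (c * C) + 2 / C ≤ B := le_max_right _ _
  have hne : (Finset.range (K + 1)).Nonempty := ⟨0, by simp⟩
  set S := (Finset.range (K + 1)).sup' hne Y with hS
  set M := max B S with hM
  have key : ∀ n : ℕ, Y (K + n) ≤ M := by
    intro n
    induction n with
    | zero =>
      exact le_trans (Finset.le_sup' Y (Finset.mem_range.mpr (by omega))) (le_max_right _ _)
    | succ n ih =>
      have hk1 : K + (n + 1) - 1 = K + n := by omega
      have hkpos : (0 : ℝ) < (K + (n + 1) : ℕ) := by
        exact_mod_cast Nat.pos_of_ne_zero (by omega)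
      have hk1' : (1 : ℝ) ≤ ((K + (n + 1) : ℕ) : ℝ) := by
        exact_mod_cast Nat.one_le_iff_ne_zero.mpr (by omega)
      rcases le_or_gt (Y (K + n)) 1 with h | h
      · have := h2 (K + (n + 1)) (by omega) (by rw [hk1]; exact h)
        exact le_trans this (le_trans hB2 (le_max_left _ _))
      · have hrec := h1 (K + (n + 1)) (by omega) (by rw [hk1]; exact h)
        rw [hk1] at hrec
        set k : ℝ := ((K + (n + 1) : ℕ) : ℝ) with hkdef
        set Yp := Y (K + n) with hYp
        have hYppos : 0 < Yp := hYpos _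
        have hYpN : (1 : ℝ) ≤ Yp ^ N := one_le_pow₀ h.le
        have hYpNpos : (0 : ℝ) < Yp ^ N := by positivity
        rcases le_or_gt (2 / (c * C)) Yp with hcase | hcase
        · -- decreasing case: Y k ≤ Yp
          have step : 2 / (C * k * Yp ^ N) ≤ c * Yp / k := by
            have hA : 2 / (C * k * Yp ^ N) ≤ 2 / (C * k) := by
              apply div_le_div_of_nonneg_left (by norm_num) (by positivity)
              nlinarith [mul_le_mul_of_nonneg_left hYpN (le_of_lt (mul_pos hC hkpos))]
            have hBb : 2 / (C * k) ≤ c * Yp / k := by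
              rw [div_le_div_iff₀ (by positivity) hkpos]
              have : 2 ≤ c * Yp * C := by
                have := (div_le_iff₀ (by positivity)).mp hcase
                nlinarith
              nlinarith
            linarith
          have expand : Yp * (1 - c / k) = Yp - c * Yp / k := by ring
          have : Y (K + (n + 1)) ≤ Yp := by
            rw [expand] at hrec; linarith
          exact this.trans ih
        · -- small case: bounded by 2/(cC) + 2/C
          have hck : 0 ≤ c / k := by positivity
          have b1 : Yp * (1 - c / k) ≤ Yp := by nlinarith
          have b2 : 2 / (C * k * Yp ^ N) ≤ 2 / C := by
            apply div_le_div_of_nonneg_left (by norm_num) hC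
            have h1k : C * 1 ≤ C * k := by nlinarith
            nlinarith [mul_le_mul_of_nonneg_left hYpN (le_of_lt (mul_pos hC hkpos))]
          have : Y (K + (n + 1)) ≤ 2 / (c * C) + 2 / C := by linarith
          exact le_trans this (le_trans hBc (le_max_left _ _))
  refine ⟨M, ?_⟩
  rintro y ⟨k, rfl⟩
  rcases le_or_gt k K with hk | hk
  · exact le_trans (Finset.le_sup' Y (Finset.mem_range.mpr (by omega))) (le_max_right _ _)
  · have : k = K + (k - K) := by omega
    rw [this]; exact key _
end
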